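/- Given an S-MAPF instance obtained from a MAPF instance by setting all initial start times to 0 and choosing cycle time c strictly greater than the makespan of every agent's path, a set of paths is collision-free in the S-MAPF sense if and only if it is collision-free in the MAPF sense (agents disappearing at goals). -/
import Mathlib


/-- S-MAPF collision-freedom for streams with all offsets 0 and cycle time `c`:
no cyclic vertex conflicts and no cyclic edge conflicts (between distinct
streams or within the same stream). -/
def SMAPFCollisionFree {V : Type*} {n : ℕ} (c : ℕ) (p : Fin n → ℕ → V)
    (l : Fin n → ℕ) : Prop :=
  (∀ i j : Fin n, ∀ qi qj : ℕ, qi < l i → qj < l j →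
      p i qi = p j qj → qi ≡ qj [MOD c] → i = j ∧ qi = qj) ∧
  (∀ i j : Fin n, ∀ qi qj : ℕ, qi + 1 < l i → qj + 1 < l j →
      p i qi = p j (qj + 1) → p i (qi + 1) = p j qj → qi ≡ qj [MOD c] →
      i = j ∧ qi = qj)

/-- MAPF collision-freedom (agents disappear at goals, all starting at time 0):
no vertex conflicts and no edge (swap) conflicts between distinct agents. -/
def MAPFCollisionFree {V : Type*} {n : ℕ} (p : Fin n → ℕ → V)
    (l : Fin n → ℕ) : Prop :=
  (∀ i j : Fin n, i ≠ j → ∀ t : ℕ, t < l i → t < l j → p i t ≠ p j t) ∧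
  (∀ i j : Fin n, i ≠ j → ∀ t : ℕ, t + 1 < l i → t + 1 < l j →
      ¬(p i t = p j (t + 1) ∧ p i (t + 1) = p j t))

theorem stmt_8 {V : Type*} {n : ℕ} (c : ℕ) (p : Fin n → ℕ → V)
    (l : Fin n → ℕ) (hc : 0 < c) (hl : ∀ i, l i ≤ c) :
    SMAPFCollisionFree c p l ↔ MAPFCollisionFree p l := by
  constructor
  · rintro ⟨hv, he⟩
    constructor
    · intro i j hij t hti htj hpe
      exact hij (hv i j t t hti htj hpe (Nat.ModEq.refl _)).1
    · intro i j hij t hti htj ⟨h1, h2⟩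
      exact hij (he i j t t hti htj h1 h2 (Nat.ModEq.refl _)).1
  · rintro ⟨hv, he⟩
    have key : ∀ (i j : Fin n) (qi qj : ℕ), qi < l i → qj < l j →
        qi ≡ qj [MOD c] → qi = qj := by
      intro i j qi qj hi hj hm
      have h1 : qi < c := lt_of_lt_of_le hi (hl i)
      have h2 : qj < c := lt_of_lt_of_le hj (hl j)
      simpa [Nat.ModEq, Nat.mod_eq_of_lt h1, Nat.mod_eq_of_lt h2] using hm
    constructor
    · intro i j qi qj hi hj hpe hm
      have hq : qi = qj := key i j qi qj hi hj hm
      subst hq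
      by_cases hij : i = j
      · exact ⟨hij, rfl⟩
      · exact absurd hpe (hv i j hij qi hi hj)
    · intro i j qi qj hi hj h1 h2 hm
      have hq : qi = qj := key i j qi qj (Nat.lt_of_succ_lt hi) (Nat.lt_of_succ_lt hj) hm
      subst hq
      by_cases hij : i = j
      · exact ⟨hij, rfl⟩
      · exact absurd ⟨h1, h2⟩ (he i j hij qi hi hj)
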